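/- arXiv:1501.03621 — 2 statements merged into one kernel-verified Lean document; each statement's English description precedes it below -/
import Mathlib

section
/- The set of sums of two rank-one tensors, {a⊗b⊗c + a'⊗b'⊗c' : a, b, c, a', b', c' ∈ ℂ²}, is dense in ℂ² ⊗ ℂ² ⊗ ℂ² (with respect to the standard topology on this finite-dimensional complex vector space). (The secant variety σ(ℙ¹×ℙ¹×ℙ¹) has the expected dimension 7 and fills ℙ⁷.) -/
open TensorProduct

noncomputable section

/-- The single-qubit space ℂ². -/
abbrev Qubit : Type := Fin 2 → ℂ

/-- The three-qubit Hilbert space ℂ² ⊗ ℂ² ⊗ ℂ². -/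
abbrev ThreeQubit : Type := Qubit ⊗[ℂ] (Qubit ⊗[ℂ] Qubit)

/-- Standard basis vector e₀ of ℂ². -/
def e0 : Qubit := ![1, 0]

/-- Standard basis vector e₁ of ℂ². -/
def e1 : Qubit := ![0, 1]

/-- SLOCC equivalence: ψ and φ are related by invertible local linear maps. -/
def SLOCC (ψ φ : ThreeQubit) : Prop :=
  ∃ g₁ g₂ g₃ : Qubit ≃ₗ[ℂ] Qubit,
    TensorProduct.map g₁.toLinearMap
      (TensorProduct.map g₂.toLinearMap g₃.toLinearMap) ψ = φ

def SepState : ThreeQubit := e0 ⊗ₜ[ℂ] (e0 ⊗ₜ[ℂ] e0)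
def B1 : ThreeQubit := e0 ⊗ₜ[ℂ] (e0 ⊗ₜ[ℂ] e0) + e0 ⊗ₜ[ℂ] (e1 ⊗ₜ[ℂ] e1)
def B2 : ThreeQubit := e0 ⊗ₜ[ℂ] (e0 ⊗ₜ[ℂ] e0) + e1 ⊗ₜ[ℂ] (e0 ⊗ₜ[ℂ] e1)
def B3 : ThreeQubit := e0 ⊗ₜ[ℂ] (e0 ⊗ₜ[ℂ] e0) + e1 ⊗ₜ[ℂ] (e1 ⊗ₜ[ℂ] e0)
def W : ThreeQubit := e1 ⊗ₜ[ℂ] (e0 ⊗ₜ[ℂ] e0) + e0 ⊗ₜ[ℂ] (e1 ⊗ₜ[ℂ] e0) + e0 ⊗ₜ[ℂ] (e0 ⊗ₜ[ℂ] e1)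
def GHZ : ThreeQubit := e0 ⊗ₜ[ℂ] (e0 ⊗ₜ[ℂ] e0) + e1 ⊗ₜ[ℂ] (e1 ⊗ₜ[ℂ] e1)

/-- The standard basis e_i ⊗ e_j ⊗ e_k of the three-qubit space. -/
def stdBasis : Module.Basis (Fin 2 × Fin 2 × Fin 2) ℂ ThreeQubit :=
  (Pi.basisFun ℂ (Fin 2)).tensorProduct
    ((Pi.basisFun ℂ (Fin 2)).tensorProduct (Pi.basisFun ℂ (Fin 2)))

/-- The standard (unique Hausdorff vector-space) topology on the finite-dimensional space
ℂ²⊗ℂ²⊗ℂ², induced from the coordinate norm. -/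
instance : NormedAddCommGroup ThreeQubit :=
  NormedAddCommGroup.induced ThreeQubit (Fin 2 × Fin 2 × Fin 2 → ℂ)
    stdBasis.equivFun.toLinearMap stdBasis.equivFun.injective

instance : NormedSpace ℂ ThreeQubit :=
  NormedSpace.induced ℂ ThreeQubit (Fin 2 × Fin 2 × Fin 2 → ℂ) stdBasis.equivFun.toLinearMap

/-!
Write `ψ = e₀ ⊗ T₀ + e₁ ⊗ T₁` with `2 × 2` slices `T₀, T₁`. If `det T₀ ≠ 0` and the quadratic
`l ↦ det (T₁ - l • T₀)` has two distinct roots `l₁, l₂`, then `T₁ - l₁ • T₀` and `T₁ - l₂ • T₀`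
are rank-one matrices spanning the pencil, and this writes `ψ` as a sum of two rank-one tensors.
The product of `det T₀` with that discriminant is a polynomial in the coordinates of `ψ` which
does not vanish at `e₀e₀e₀ + e₀e₁e₁ + e₁e₁e₁`; an analytic function vanishing on an open set
vanishes identically, so the complement of its zero set is dense.
-/

theorem Matrix.exists_vecMulVec_eq_of_det_eq_zero {K : Type*} [Field K]
    {M : Matrix (Fin 2) (Fin 2) K} (hM : M.det = 0) :
    ∃ u v : Fin 2 → K, vecMulVec u v = M := by
  rw [det_fin_two] at hM
  by_cases h00 : M 0 0 = 0
  · rcases mul_eq_zero.1 (by simpa [h00] using hM : M 0 1 * M 1 0 = 0) with h01 | h10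
    · refine ⟨![0, 1], M 1, ?_⟩
      ext i j; fin_cases i <;> fin_cases j <;> simp [vecMulVec_apply, h00, h01]
    · refine ⟨![M 0 1, M 1 1], ![0, 1], ?_⟩
      ext i j; fin_cases i <;> fin_cases j <;> simp [vecMulVec_apply, h00, h10]
  · have h11 : M 1 0 / M 0 0 * M 0 1 = M 1 1 := by
      field_simp
      linear_combination -hM
    refine ⟨![1, M 1 0 / M 0 0], M 0, ?_⟩
    ext i j; fin_cases i <;> fin_cases j <;> simp [vecMulVec_apply, h00, h11]

theorem pencil_eq_smul_add_smul {K W : Type*} [Field K] [AddCommGroup W] [Module K W]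
    (T : Fin 2 → W) {l₁ l₂ : K} (hl : l₁ ≠ l₂) (i : Fin 2) :
    T i = ![1, l₁] i • (l₁ - l₂)⁻¹ • (T 1 - l₂ • T 0)
      + ![1, l₂] i • (l₂ - l₁)⁻¹ • (T 1 - l₁ • T 0) := by
  have h₁ : l₁ - l₂ ≠ 0 := sub_ne_zero.2 hl
  have h₂ : l₂ - l₁ ≠ 0 := sub_ne_zero.2 hl.symm
  fin_cases i <;>
    simp only [Fin.zero_eta, Fin.mk_one, Matrix.cons_val_zero, Matrix.cons_val_one,
      Matrix.cons_val_fin_one, one_smul] <;>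
    match_scalars <;> field_simp <;> ring

theorem exists_ne_roots_of_discrim_ne_zero {K : Type*} [Field K] [IsAlgClosed K] [NeZero (2 : K)]
    {a b c : K} (ha : a ≠ 0) (hd : discrim a b c ≠ 0) :
    ∃ x y, x ≠ y ∧ a * (x * x) + b * x + c = 0 ∧ a * (y * y) + b * y + c = 0 := by
  obtain ⟨s, hs⟩ := IsAlgClosed.exists_eq_mul_self (discrim a b c)
  have hs0 : s ≠ 0 := by rintro rfl; simp_all
  refine ⟨(-b + s) / (2 * a), (-b - s) / (2 * a), ?_, (quadratic_eq_zero_iff ha hs _).2 (.inl rfl),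
    (quadratic_eq_zero_iff ha hs _).2 (.inr rfl)⟩
  rw [Ne, div_left_inj' (mul_ne_zero two_ne_zero ha)]
  intro h
  have h2s : 2 * s = 0 := by linear_combination h
  exact hs0 ((mul_eq_zero.1 h2s).resolve_left two_ne_zero)

theorem Matrix.det_sub_smul_fin_two {R : Type*} [CommRing R] (X Y : Matrix (Fin 2) (Fin 2) R)
    (l : R) : (Y - l • X).det = X.det * (l * l) + (X.det + Y.det - (X + Y).det) * l + Y.det := by
  simp only [det_fin_two, sub_apply, smul_apply, add_apply, smul_eq_mul]
  ring

/-- The discriminant of the quadratic polynomial `l ↦ det (Y - l • X)`. -/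
def pencilDiscrim {R : Type*} [CommRing R] (X Y : Matrix (Fin 2) (Fin 2) R) : R :=
  discrim X.det (X.det + Y.det - (X + Y).det) Y.det

theorem exists_ne_det_sub_smul_eq_zero {K : Type*} [Field K] [IsAlgClosed K] [NeZero (2 : K)]
    {X Y : Matrix (Fin 2) (Fin 2) K} (hX : X.det ≠ 0) (hXY : pencilDiscrim X Y ≠ 0) :
    ∃ l₁ l₂ : K, l₁ ≠ l₂ ∧ (Y - l₁ • X).det = 0 ∧ (Y - l₂ • X).det = 0 := by
  simp only [Matrix.det_sub_smul_fin_two]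
  exact exists_ne_roots_of_discrim_ne_zero hX hXY

def slice (ψ : ThreeQubit) (i : Fin 2) : Matrix (Fin 2) (Fin 2) ℂ :=
  fun j k => stdBasis.repr ψ (i, j, k)

theorem stdBasis_repr_tmul (a b c : Qubit) (i j k : Fin 2) :
    stdBasis.repr (a ⊗ₜ[ℂ] (b ⊗ₜ[ℂ] c)) (i, j, k) = a i * b j * c k := by
  simp only [stdBasis, Module.Basis.tensorProduct_repr_tmul_apply, Pi.basisFun_repr, smul_eq_mul]
  ring

theorem eq_tmul_add_tmul_of_slice {ψ : ThreeQubit} {a b c a' b' c' : Qubit}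
    (h : ∀ i, slice ψ i = a i • Matrix.vecMulVec b c + a' i • Matrix.vecMulVec b' c') :
    ψ = a ⊗ₜ[ℂ] (b ⊗ₜ[ℂ] c) + a' ⊗ₜ[ℂ] (b' ⊗ₜ[ℂ] c') := by
  refine stdBasis.repr.injective (Finsupp.ext fun ⟨i, j, k⟩ => ?_)
  have hijk := congr_fun (congr_fun (h i) j) k
  simp only [slice, Matrix.add_apply, Matrix.smul_apply, Matrix.vecMulVec_apply, smul_eq_mul]
    at hijk
  rw [map_add, Finsupp.add_apply, stdBasis_repr_tmul, stdBasis_repr_tmul, hijk]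
  ring

def rankTwoCertificate (ψ : ThreeQubit) : ℂ :=
  (slice ψ 0).det * pencilDiscrim (slice ψ 0) (slice ψ 1)

theorem exists_eq_tmul_add_tmul_of_rankTwoCertificate_ne_zero {ψ : ThreeQubit}
    (hψ : rankTwoCertificate ψ ≠ 0) : ∃ a b c a' b' c' : Qubit,
      ψ = a ⊗ₜ[ℂ] (b ⊗ₜ[ℂ] c) + a' ⊗ₜ[ℂ] (b' ⊗ₜ[ℂ] c') := by
  obtain ⟨l₁, l₂, hl, h₁, h₂⟩ :=
    exists_ne_det_sub_smul_eq_zero (left_ne_zero_of_mul hψ) (right_ne_zero_of_mul hψ)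
  obtain ⟨b, c, hbc⟩ := Matrix.exists_vecMulVec_eq_of_det_eq_zero
    (M := (l₁ - l₂)⁻¹ • (slice ψ 1 - l₂ • slice ψ 0)) (by rw [Matrix.det_smul, h₂, mul_zero])
  obtain ⟨b', c', hbc'⟩ := Matrix.exists_vecMulVec_eq_of_det_eq_zero
    (M := (l₂ - l₁)⁻¹ • (slice ψ 1 - l₁ • slice ψ 0)) (by rw [Matrix.det_smul, h₁, mul_zero])
  refine ⟨![1, l₁], b, c, ![1, l₂], b', c', eq_tmul_add_tmul_of_slice fun i => ?_⟩
  rw [hbc, hbc']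
  exact pencil_eq_smul_add_smul (slice ψ) hl i

theorem analyticOnNhd_rankTwoCertificate : AnalyticOnNhd ℂ rankTwoCertificate Set.univ := by
  intro ψ _
  have hcoord : ∀ i j k, AnalyticAt ℂ (fun ψ => slice ψ i j k) ψ := fun i j k =>
    (LinearMap.toContinuousLinearMap (stdBasis.coord (i, j, k))).analyticAt ψ
  unfold rankTwoCertificate pencilDiscrim discrim
  simp only [Matrix.det_fin_two, Matrix.add_apply]
  fun_prop

theorem AnalyticOnNhd.dense_setOf_ne_zero {𝕜 E F : Type*} [NontriviallyNormedField 𝕜]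
    [NormedAddCommGroup E] [NormedSpace 𝕜 E] [PreconnectedSpace E]
    [NormedAddCommGroup F] [NormedSpace 𝕜 F] {f : E → F} (hf : AnalyticOnNhd 𝕜 f Set.univ)
    {x₀ : E} (hx₀ : f x₀ ≠ 0) : Dense {x | f x ≠ 0} := by
  intro x
  rw [mem_closure_iff_frequently]
  by_contra hx
  rw [Filter.not_frequently] at hx
  exact hx₀ (hf.eqOn_zero_of_preconnected_of_eventuallyEq_zero isPreconnected_univ
    (Set.mem_univ x) (hx.mono fun y hy => not_not.1 hy) (Set.mem_univ x₀))

theorem exists_rankTwoCertificate_ne_zero : ∃ ψ, rankTwoCertificate ψ ≠ 0 :=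
  ⟨B1 + e1 ⊗ₜ[ℂ] (e1 ⊗ₜ[ℂ] e1), by
    simp [rankTwoCertificate, pencilDiscrim, discrim, Matrix.det_fin_two, slice, B1,
      stdBasis_repr_tmul, e0, e1]⟩

/-- The set of sums of two rank-one tensors is dense in ℂ²⊗ℂ²⊗ℂ²:
the secant variety σ(ℙ¹×ℙ¹×ℙ¹) fills ℙ⁷. -/
theorem sums_of_two_rank_one_dense :
    Dense {ψ : ThreeQubit | ∃ a b c a' b' c' : Qubit,
      ψ = a ⊗ₜ[ℂ] (b ⊗ₜ[ℂ] c) + a' ⊗ₜ[ℂ] (b' ⊗ₜ[ℂ] c')} := by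
  obtain ⟨ψ₀, hψ₀⟩ := exists_rankTwoCertificate_ne_zero
  exact (analyticOnNhd_rankTwoCertificate.dense_setOf_ne_zero hψ₀).mono
    fun _ => exists_eq_tmul_add_tmul_of_rankTwoCertificate_ne_zero

end
end

section
/- Every tensor in ℂ² ⊗ ℂ² ⊗ ℂ² can be written as a sum of at most three rank-one tensors a⊗b⊗c with a, b, c ∈ ℂ². (Consequence of the six-orbit classification: the maximal tensor rank in the 2×2×2 format is 3, attained by the W class.) -/
open TensorProduct

noncomputable section

/-! Slice `ψ` along the first factor as `e₀ ⊗ X + e₁ ⊗ Y` with `X, Y ∈ ℂ² ⊗ ℂ²`, read as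
2 × 2 matrices. If `Y` is singular it is a rank-one tensor, and `X` is a sum of two. Otherwise,
since ℂ is algebraically closed, some `λ` makes `X - λY` singular, and
`ψ = e₀ ⊗ (X - λY) + (λe₀ + e₁) ⊗ Y` is one rank-one tensor plus the two of `Y`. -/

lemma Qubit.eq_smul_e0_add_smul_e1 (v : Qubit) : v = v 0 • e0 + v 1 • e1 := by
  funext i; fin_cases i <;> simp [e0, e1]

lemma exists_eq_e0_tmul_add_e1_tmul {M : Type*} [AddCommMonoid M] [Module ℂ M]
    (ψ : Qubit ⊗[ℂ] M) : ∃ x y : M, ψ = e0 ⊗ₜ[ℂ] x + e1 ⊗ₜ[ℂ] y := by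
  induction ψ using TensorProduct.induction_on with
  | zero => exact ⟨0, 0, by simp⟩
  | tmul v m =>
    refine ⟨v 0 • m, v 1 • m, ?_⟩
    conv_lhs => rw [v.eq_smul_e0_add_smul_e1]
    rw [add_tmul, smul_tmul, smul_tmul]
  | add φ φ' hφ hφ' =>
    obtain ⟨x, y, rfl⟩ := hφ
    obtain ⟨x', y', rfl⟩ := hφ'
    exact ⟨x + x', y + y', by simp only [tmul_add]; abel⟩

lemma exists_smul_eq_of_det_eq_zero {K : Type*} [Field K] {v w : Fin 2 → K}
    (h : (Matrix.of ![v, w]).det = 0) : ∃ (α β : K) (c : Fin 2 → K), v = α • c ∧ w = β • c := by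
  obtain ⟨x, hx0, hx⟩ := Matrix.exists_vecMul_eq_zero_iff.mpr h
  have hrel : x 0 • v + x 1 • w = 0 := by
    ext j; simpa [Matrix.vecMul, dotProduct, Fin.sum_univ_two, mul_comm] using congrFun hx j
  by_cases h0 : x 0 = 0
  · have h1 : x 1 ≠ 0 := fun h1 => hx0 (by ext i; fin_cases i <;> simp [h0, h1])
    have hw : w = 0 := by simpa [h0, h1] using hrel
    exact ⟨1, 0, v, by simp, by simp [hw]⟩
  · refine ⟨-(x 0)⁻¹ * x 1, 1, w, ?_, by simp⟩
    calc v = (x 0)⁻¹ • (x 0 • v) := (inv_smul_smul₀ h0 v).symm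
      _ = _ := by rw [eq_neg_of_add_eq_zero_left hrel]; module

namespace Matrix

lemma exists_det_sub_smul_eq_zero {K n : Type*} [Field K] [IsAlgClosed K] [Fintype n]
    [DecidableEq n] [Nonempty n] (A B : Matrix n n K) (hB : IsUnit B.det) :
    ∃ l : K, (A - l • B).det = 0 := by
  obtain ⟨l, hl⟩ := Module.End.exists_eigenvalue (toLin' (B⁻¹ * A))
  obtain ⟨v, hv⟩ := hl.exists_hasEigenvector
  refine ⟨l, exists_mulVec_eq_zero_iff.mp ⟨v, hv.2, ?_⟩⟩
  have hAv : A *ᵥ v = l • B *ᵥ v := by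
    have := congrArg (B *ᵥ ·) hv.apply_eq_smul
    simpa [mulVec_mulVec, mul_nonsing_inv_cancel_left _ _ hB, mulVec_smul] using this
  rw [sub_mulVec, smul_mulVec, hAv, sub_self]

end Matrix

lemma exists_tmul_eq_of_det_eq_zero {v w : Qubit} (h : (Matrix.of ![v, w]).det = 0) :
    ∃ b c : Qubit, e0 ⊗ₜ[ℂ] v + e1 ⊗ₜ[ℂ] w = b ⊗ₜ c := by
  obtain ⟨α, β, c, rfl, rfl⟩ := exists_smul_eq_of_det_eq_zero h
  exact ⟨α • e0 + β • e1, c, by simp only [add_tmul, tmul_smul, smul_tmul']⟩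

/-- Every three-qubit tensor is a sum of at most three rank-one tensors
(the maximal tensor rank in the 2×2×2 format is 3). -/
theorem tensor_rank_le_three (ψ : ThreeQubit) :
    ∃ a b c a' b' c' a'' b'' c'' : Qubit,
      ψ = a ⊗ₜ[ℂ] (b ⊗ₜ[ℂ] c) + a' ⊗ₜ[ℂ] (b' ⊗ₜ[ℂ] c') + a'' ⊗ₜ[ℂ] (b'' ⊗ₜ[ℂ] c'') := by
  obtain ⟨x, y, rfl⟩ := exists_eq_e0_tmul_add_e1_tmul ψ
  obtain ⟨u₀₀, u₀₁, rfl⟩ := exists_eq_e0_tmul_add_e1_tmul x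
  obtain ⟨u₁₀, u₁₁, rfl⟩ := exists_eq_e0_tmul_add_e1_tmul y
  by_cases hY : (Matrix.of ![u₁₀, u₁₁]).det = 0
  · obtain ⟨b, c, hbc⟩ := exists_tmul_eq_of_det_eq_zero hY
    exact ⟨e0, e0, u₀₀, e0, e1, u₀₁, e1, b, c, by rw [hbc, tmul_add]⟩
  · obtain ⟨l, hl⟩ :=
      (Matrix.of ![u₀₀, u₀₁]).exists_det_sub_smul_eq_zero _ (isUnit_iff_ne_zero.mpr hY)
    have hpencil : Matrix.of ![u₀₀, u₀₁] - l • Matrix.of ![u₁₀, u₁₁]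
        = Matrix.of ![u₀₀ - l • u₁₀, u₀₁ - l • u₁₁] := by
      ext i j; fin_cases i <;> simp
    obtain ⟨b, c, hbc⟩ := exists_tmul_eq_of_det_eq_zero (hpencil ▸ hl)
    refine ⟨e0, b, c, l • e0 + e1, e0, u₁₀, l • e0 + e1, e1, u₁₁, ?_⟩
    rw [← hbc]
    simp only [tmul_add, add_tmul, tmul_sub, tmul_smul, ← smul_tmul']
    module

end
end
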